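/- arXiv:1803.06271 — 2 statements merged into one kernel-verified Lean document; each statement's English description precedes it below -/
import Mathlib

section
/- Let (X, 𝒜) be a measurable space. (1) If M is a maximal ideal of the ring M(X), then Z[M] = {Z(f) : f ∈ M} is a Z_𝒜-ultrafilter on X. (2) If 𝓕 is a Z_𝒜-ultrafilter on X, then Z⁻¹[𝓕] = {f ∈ M(X) : Z(f) ∈ 𝓕} is a maximal ideal of M(X). -/
open Set

/-- The ring of all real-valued measurable functions on a measurable space `X`,
as a subring of the pointwise ring `X → ℝ`. -/
def Mring (X : Type*) [MeasurableSpace X] : Subring (X → ℝ) where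
  carrier := {f | Measurable f}
  mul_mem' hf hg := hf.mul hg
  one_mem' := measurable_one
  add_mem' hf hg := hf.add hg
  zero_mem' := measurable_zero
  neg_mem' hf := hf.neg

/-- The zero-set of a measurable function. -/
def zset {X : Type*} [MeasurableSpace X] (f : Mring X) : Set X :=
  {x | (f : X → ℝ) x = 0}

/-- The cozero-set of a measurable function. -/
def coz {X : Type*} [MeasurableSpace X] (f : Mring X) : Set X :=
  {x | (f : X → ℝ) x ≠ 0}

/-- A `Z_𝒜`-filter on `X`: a proper filter of the lattice of measurable sets,
i.e. a nonempty collection of measurable sets not containing `∅`, closed under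
binary intersections, and containing every measurable superset of each member. -/
def IsZFilter {X : Type*} [MeasurableSpace X] (F : Set (Set X)) : Prop :=
  F.Nonempty ∧ (∀ A ∈ F, MeasurableSet A) ∧ ∅ ∉ F ∧
    (∀ A ∈ F, ∀ B ∈ F, A ∩ B ∈ F) ∧
    (∀ A ∈ F, ∀ B : Set X, MeasurableSet B → A ⊆ B → B ∈ F)

/-- A `Z_𝒜`-ultrafilter on `X`: a `Z_𝒜`-filter maximal with respect to
inclusion among all `Z_𝒜`-filters on `X`. -/
def IsZUltrafilter {X : Type*} [MeasurableSpace X] (F : Set (Set X)) : Prop :=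
  IsZFilter F ∧ ∀ G : Set (Set X), IsZFilter G → F ⊆ G → G = F

section Aux

variable {X : Type*} [MeasurableSpace X]

lemma zset_measurable (f : Mring X) : MeasurableSet (zset f) := by
  have : zset f = (f : X → ℝ) ⁻¹' {0} := rfl
  rw [this]
  exact f.2 (measurableSet_singleton 0)

/-- Characteristic-type function: 0 on A, 1 off A. -/
noncomputable def chi (A : Set X) (hA : MeasurableSet A) : Mring X :=
  ⟨(Aᶜ).indicator 1, measurable_one.indicator hA.compl⟩

lemma zset_chi (A : Set X) (hA : MeasurableSet A) : zset (chi A hA) = A := by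
  ext x
  simp only [zset, chi, Set.mem_setOf_eq, Set.indicator_apply]
  by_cases h : x ∈ A <;> simp [h]

lemma zset_inter (f g : Mring X) : zset f ∩ zset g = zset (f*f + g*g) := by
  ext x
  simp only [zset, Set.mem_inter_iff, Set.mem_setOf_eq, Subring.coe_add,
    Subring.coe_mul, Pi.add_apply, Pi.mul_apply]
  constructor
  · rintro ⟨h1, h2⟩; rw [h1, h2]; ring
  · intro h
    have h1 : (f : X → ℝ) x * (f : X → ℝ) x = 0 ∧ (g : X → ℝ) x * (g : X → ℝ) x = 0 :=
      (add_eq_zero_iff_of_nonneg (mul_self_nonneg _) (mul_self_nonneg _)).1 h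
    exact ⟨mul_self_eq_zero.1 h1.1, mul_self_eq_zero.1 h1.2⟩

lemma zset_nonempty_of_mem {M : Ideal (Mring X)} (hM : M ≠ ⊤) {f : Mring X}
    (hf : f ∈ M) : zset f ≠ ∅ := by
  intro h
  apply hM
  have hne : ∀ x, (f : X → ℝ) x ≠ 0 := by
    intro x hx
    have : x ∈ zset f := hx
    simp [h] at this
  set g : Mring X := ⟨fun x => ((f : X → ℝ) x)⁻¹, f.2.inv⟩ with hg
  have hunit : g * f = 1 := by
    apply Subtype.ext
    ext x
    simp only [Subring.coe_mul, Pi.mul_apply, hg]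
    exact inv_mul_cancel₀ (hne x)
  rw [Ideal.eq_top_iff_one]
  rw [← hunit]
  exact Ideal.mul_mem_left M g hf

/-- The ideal associated to a Z-filter. -/
def zIdeal (F : Set (Set X)) (hF : IsZFilter F) : Ideal (Mring X) where
  carrier := {f | zset f ∈ F}
  add_mem' := by
    intro f g hf hg
    obtain ⟨hne, hmeas, hempty, hinter, hsup⟩ := hF
    have h1 : zset f ∩ zset g ∈ F := hinter _ hf _ hg
    refine hsup _ h1 _ (zset_measurable _) ?_
    intro x hx
    simp only [zset, Set.mem_setOf_eq, Subring.coe_add, Pi.add_apply]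
    simp only [Set.mem_inter_iff, zset, Set.mem_setOf_eq] at hx
    rw [hx.1, hx.2, add_zero]
  zero_mem' := by
    obtain ⟨⟨A, hA⟩, hmeas, hempty, hinter, hsup⟩ := hF
    have : zset (0 : Mring X) = Set.univ := by
      ext x; simp [zset]
    rw [Set.mem_setOf_eq, this]
    exact hsup _ hA _ MeasurableSet.univ (Set.subset_univ _)
  smul_mem' := by
    intro r f hf
    obtain ⟨hne, hmeas, hempty, hinter, hsup⟩ := hF
    refine hsup _ hf _ (zset_measurable _) ?_
    intro x hx
    simp only [zset, Set.mem_setOf_eq] at hx ⊢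
    show (r : X → ℝ) x * (f : X → ℝ) x = 0
    rw [hx, mul_zero]

lemma zIdeal_ne_top (F : Set (Set X)) (hF : IsZFilter F) : zIdeal F hF ≠ ⊤ := by
  intro h
  have h1 : (1 : Mring X) ∈ zIdeal F hF := h ▸ Submodule.mem_top
  have : zset (1 : Mring X) = ∅ := by
    ext x; simp [zset]
  have h2 : zset (1 : Mring X) ∈ F := h1
  rw [this] at h2
  exact hF.2.2.1 h2

lemma zset_image_isZFilter (M : Ideal (Mring X)) (hM : M ≠ ⊤) :
    IsZFilter {Z : Set X | ∃ f ∈ M, Z = zset f} := by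
  refine ⟨⟨zset 0, 0, M.zero_mem, rfl⟩, ?_, ?_, ?_, ?_⟩
  · rintro A ⟨f, hf, rfl⟩; exact zset_measurable f
  · rintro ⟨f, hf, hfe⟩
    exact zset_nonempty_of_mem hM hf hfe.symm
  · rintro A ⟨f, hf, rfl⟩ B ⟨g, hg, rfl⟩
    exact ⟨f*f + g*g, M.add_mem (Ideal.mul_mem_left M f hf) (Ideal.mul_mem_left M g hg),
      zset_inter f g⟩
  · rintro A ⟨f, hf, rfl⟩ B hB hsub
    refine ⟨f * chi B hB, Ideal.mul_mem_right _ M hf, ?_⟩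
    ext x
    simp only [zset, Set.mem_setOf_eq, Subring.coe_mul, Pi.mul_apply, mul_eq_zero]
    constructor
    · intro hx
      right
      have : x ∈ zset (chi B hB) := by rw [zset_chi]; exact hx
      exact this
    · rintro (h | h)
      · exact hsub h
      · have : x ∈ zset (chi B hB) := h
        rw [zset_chi] at this; exact this

end Aux


/-- (1) If `M` is a maximal ideal of `M(X)`, then `Z[M]` is a `Z_𝒜`-ultrafilter
on `X`.  (2) If `𝓕` is a `Z_𝒜`-ultrafilter on `X`, then
`Z⁻¹[𝓕] = {f ∈ M(X) : Z(f) ∈ 𝓕}` is a maximal ideal of `M(X)`. -/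
theorem stmt_3 {X : Type*} [MeasurableSpace X] :
    (∀ M : Ideal (Mring X), M.IsMaximal →
      IsZUltrafilter {Z : Set X | ∃ f ∈ M, Z = zset f}) ∧
    (∀ F : Set (Set X), IsZUltrafilter F →
      ∃ M : Ideal (Mring X), M.IsMaximal ∧ ∀ f : Mring X, f ∈ M ↔ zset f ∈ F) := by
  constructor
  · intro M hM
    have hMt : M ≠ ⊤ := hM.ne_top
    refine ⟨zset_image_isZFilter M hMt, ?_⟩
    intro G hG hsub
    have hMsub : M ≤ zIdeal G hG := fun f hf => hsub ⟨f, hf, rfl⟩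
    have heq : M = zIdeal G hG := hM.eq_of_le (zIdeal_ne_top G hG) hMsub
    apply Set.Subset.antisymm _ hsub
    intro A hA
    have hAm : MeasurableSet A := hG.2.1 _ hA
    have hchi : chi A hAm ∈ zIdeal G hG := by
      show zset (chi A hAm) ∈ G
      rw [zset_chi]; exact hA
    rw [← heq] at hchi
    exact ⟨chi A hAm, hchi, (zset_chi A hAm).symm⟩
  · intro F hF
    refine ⟨zIdeal F hF.1, ?_, fun f => Iff.rfl⟩
    refine ⟨⟨zIdeal_ne_top F hF.1, ?_⟩⟩
    intro N hN
    by_contra hNt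
    have h1 : IsZFilter {Z : Set X | ∃ f ∈ N, Z = zset f} := zset_image_isZFilter N hNt
    have h2 : F ⊆ {Z : Set X | ∃ f ∈ N, Z = zset f} := by
      intro A hA
      have hAm : MeasurableSet A := hF.1.2.1 _ hA
      have hmem : chi A hAm ∈ zIdeal F hF.1 := by
        show zset (chi A hAm) ∈ F
        rw [zset_chi]; exact hA
      exact ⟨chi A hAm, hN.le hmem, (zset_chi A hAm).symm⟩
    have h3 := hF.2 _ h1 h2
    have hle : N ≤ zIdeal F hF.1 := by
      intro f hf
      show zset f ∈ F
      rw [← h3]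
      exact ⟨f, hf, rfl⟩
    exact absurd (lt_of_lt_of_le hN hle) (lt_irrefl _)
end

section
/- Let (X, 𝒜) be a measurable space and I a proper ideal of the ring M(X). The following are equivalent: (1) I is a prime ideal; (2) I contains a prime ideal of M(X); (3) for all f, g ∈ M(X), if f·g = 0 then f ∈ I or g ∈ I; (4) for every f ∈ M(X) there exists g ∈ I such that f does not change sign on Z(g), i.e., f(x) ≥ 0 for all x ∈ Z(g) or f(x) ≤ 0 for all x ∈ Z(g). -/
open Set

/-!
(4) ⇒ (1) is the heart of the matter. Membership in an ideal of `M(X)` is decided by zero-sets: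
if `g ∈ I` and `Z(g) ⊆ Z(f)` then `f = (f / g) · g ∈ I`. Given `f h ∈ I`, choose `g ∈ I` on whose
zero-set `|f| - |h|` has constant sign, say `|h| ≤ |f|`. On `Z(g² + (f h)²) = Z(g) ∩ Z(f h)` this
forces `h = 0`, so `h ∈ I`. For (3) ⇒ (4), apply (3) to `f⁺ · f⁻ = 0`.
-/

namespace Mring

variable {X : Type*} [MeasurableSpace X]

/-- The witness is `f / g`, whose junk value `0` on `Z(g)` is harmless since `f = 0` there. -/
lemma dvd_of_zset_subset {f g : Mring X} (h : zset g ⊆ zset f) : g ∣ f := by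
  refine ⟨⟨_, f.2.div g.2⟩, Subtype.ext <| funext fun x => ?_⟩
  change (f : X → ℝ) x = (g : X → ℝ) x * ((f : X → ℝ) x / (g : X → ℝ) x)
  by_cases hx : (g : X → ℝ) x = 0
  · rw [h hx, hx, zero_div, mul_zero]
  · rw [mul_div_cancel₀ _ hx]

lemma mem_of_zset_subset {I : Ideal (Mring X)} {f g : Mring X} (hg : g ∈ I)
    (h : zset g ⊆ zset f) : f ∈ I :=
  Ideal.mem_of_dvd _ (dvd_of_zset_subset h) hg

lemma zset_mul (f g : Mring X) : zset (f * g) = zset f ∪ zset g := by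
  ext x
  exact mul_eq_zero

lemma zset_mul_self_add_mul_self (f g : Mring X) :
    zset (f * f + g * g) = zset f ∩ zset g := by
  ext x
  exact mul_self_add_mul_self_eq_zero

def posPart (f : Mring X) : Mring X := ⟨fun x => ((f : X → ℝ) x)⁺, f.2.max measurable_const⟩

def negPart (f : Mring X) : Mring X := ⟨fun x => ((f : X → ℝ) x)⁻, f.2.neg.max measurable_const⟩

lemma posPart_mul_negPart (f : Mring X) : posPart f * negPart f = 0 := by
  refine Subtype.ext <| funext fun x => ?_
  change ((f : X → ℝ) x)⁺ * ((f : X → ℝ) x)⁻ = 0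
  rcases le_total ((f : X → ℝ) x) 0 with hx | hx
  · rw [posPart_eq_zero.mpr hx, zero_mul]
  · rw [negPart_eq_zero.mpr hx, mul_zero]

lemma le_zero_of_mem_zset_posPart {f : Mring X} {x : X} (hx : x ∈ zset (posPart f)) :
    (f : X → ℝ) x ≤ 0 :=
  posPart_eq_zero.mp hx

lemma nonneg_of_mem_zset_negPart {f : Mring X} {x : X} (hx : x ∈ zset (negPart f)) :
    0 ≤ (f : X → ℝ) x :=
  negPart_eq_zero.mp hx

lemma mem_of_mul_mem_of_abs_le {I : Ideal (Mring X)} {f g h : Mring X} (hg : g ∈ I)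
    (hfh : f * h ∈ I) (hle : ∀ x ∈ zset g, |(h : X → ℝ) x| ≤ |(f : X → ℝ) x|) : h ∈ I := by
  refine mem_of_zset_subset (I.add_mem (I.mul_mem_left g hg) (I.mul_mem_left (f * h) hfh)) ?_
  rw [zset_mul_self_add_mul_self, zset_mul]
  rintro x ⟨hgx, hfx | hhx⟩
  · have hle := hle x hgx
    rw [show (f : X → ℝ) x = 0 from hfx, abs_zero] at hle
    exact abs_nonpos_iff.mp hle
  · exact hhx

end Mring

open Mring in
/-- For a proper ideal `I` of `M(X)` the following are equivalent:
(1) `I` is prime; (2) `I` contains a prime ideal; (3) `f·g = 0` implies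
`f ∈ I` or `g ∈ I`; (4) for every `f ∈ M(X)` there is `g ∈ I` such that `f`
does not change sign on `Z(g)`. -/
theorem stmt_8 {X : Type*} [MeasurableSpace X] (I : Ideal (Mring X)) (hI : I ≠ ⊤) :
    List.TFAE
      [I.IsPrime,
       ∃ P : Ideal (Mring X), P.IsPrime ∧ P ≤ I,
       ∀ f g : Mring X, f * g = 0 → f ∈ I ∨ g ∈ I,
       ∀ f : Mring X, ∃ g ∈ I,
         (∀ x ∈ zset g, 0 ≤ (f : X → ℝ) x) ∨ (∀ x ∈ zset g, (f : X → ℝ) x ≤ 0)] := by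
  tfae_have 1 → 2 := fun hI => ⟨I, hI, le_rfl⟩
  tfae_have 2 → 3 := by
    rintro ⟨P, hP, hPI⟩ f g hfg
    exact (hP.mem_or_mem (hfg ▸ P.zero_mem)).imp (@hPI f) (@hPI g)
  tfae_have 3 → 4 := by
    intro h3 f
    rcases h3 _ _ (posPart_mul_negPart f) with hpos | hneg
    · exact ⟨_, hpos, .inr fun x => le_zero_of_mem_zset_posPart⟩
    · exact ⟨_, hneg, .inl fun x => nonneg_of_mem_zset_negPart⟩
  tfae_have 4 → 1 := by
    refine fun h4 => ⟨hI, fun {f h} hfh => ?_⟩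
    obtain ⟨g, hg, hsign | hsign⟩ :=
      h4 ⟨fun x => |(f : X → ℝ) x| - |(h : X → ℝ) x|, f.2.abs.sub h.2.abs⟩
    · exact .inr <| mem_of_mul_mem_of_abs_le hg hfh fun x hx => sub_nonneg.mp (hsign x hx)
    · exact .inl <| mem_of_mul_mem_of_abs_le hg (mul_comm f h ▸ hfh) fun x hx =>
        sub_nonpos.mp (hsign x hx)
  tfae_finish
end
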